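/- The parameter-dependent semiflow possesses η₃-slow relaxations if and only if at least one of the following holds: (1) there exist a point k* ∈ K, a sequence kₙ → k*, a point y ∈ ω(k*), and δ > 0 such that dist(y, ω(kₙ)) ≥ δ for every n (ω(k)-bifurcations); (2) there exist x ∈ X and k ∈ K such that the (k,x)-motion is whole and x does not belong to the closure of ω(k). -/

import Mathlib

open Filter Topology Metric Set MeasureTheory
open scoped ENNReal

/-- A parameter-dependent semiflow on a metric space `X` with parameter space `K`:
a map `f : [0,∞) × X × K → X` (encoded with time in `ℝ`, with conditions only for
nonnegative times), continuous on `[0,∞) × X × K`, satisfying the semigroup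
identities, and injective in `x` for each fixed time and parameter. -/
structure PSemiflow (X K : Type*) [MetricSpace X] [MetricSpace K] where
  f : ℝ → X → K → X
  cont : ContinuousOn (fun p : ℝ × X × K => f p.1 p.2.1 p.2.2) {p : ℝ × X × K | 0 ≤ p.1}
  map_zero : ∀ x k, f 0 x k = x
  semigroup : ∀ t t' : ℝ, 0 ≤ t → 0 ≤ t' → ∀ x k, f t (f t' x k) k = f (t + t') x k
  inj : ∀ t : ℝ, 0 ≤ t → ∀ k, Function.Injective fun x => f t x k

namespace PSemiflow

variable {X K : Type*} [MetricSpace X] [MetricSpace K] (S : PSemiflow X K)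

/-- The ω-limit set `ω(x,k)`: all limits of `f(tₙ,x,k)` along sequences `tₙ → ∞`. -/
def omega (x : X) (k : K) : Set X :=
  {y | ∃ t : ℕ → ℝ, (∀ n, 0 ≤ t n) ∧ Tendsto t atTop atTop ∧
      Tendsto (fun n => S.f (t n) x k) atTop (𝓝 y)}

/-- The complete ω-limit set `ω(k) = ⋃ₓ ω(x,k)`. -/
def omegaK (k : K) : Set X := ⋃ x : X, S.omega x k

/-- The relaxation time `η₃(x,k,ε)`: time of the final entry of the motion into the
`ε`-neighbourhood of `ω(k)`. -/
noncomputable def eta3 (x : X) (k : K) (ε : ℝ) : ℝ :=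
  sInf {t : ℝ | 0 ≤ t ∧ ∀ t' > t, infDist (S.f t' x k) (S.omegaK k) < ε}

/-- The system possesses η₃-slow relaxations. -/
def SlowEta3 : Prop := ∃ ε > (0:ℝ), ∀ T > (0:ℝ), ∃ x k, S.eta3 x k ε > T

/-- The (k,x)-motion is whole: it extends to a full trajectory `φ : ℝ → X`. -/
def IsWholeMotion (x : X) (k : K) (φ : ℝ → X) : Prop :=
  φ 0 = x ∧ ∀ s t : ℝ, 0 ≤ t → S.f t (φ s) k = φ (s + t)

end PSemiflow

/-- The α-limit set of a whole motion `φ`: all limits of `φ(tₙ)` with `tₙ → -∞`. -/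
def alphaLimit {X : Type*} [MetricSpace X] (φ : ℝ → X) : Set X :=
  {y | ∃ t : ℕ → ℝ, Tendsto t atTop atBot ∧ Tendsto (fun n => φ (t n)) atTop (𝓝 y)}

namespace PSemiflow
variable {X K : Type*} [MetricSpace X] [MetricSpace K] (S : PSemiflow X K)

end PSemiflow

/-!
Take points `f(τₙ, xₙ, kₙ)` with `τₙ → ∞` at distance `≥ ε` from `ω(kₙ)`. By compactness
of `X^ℕ × K`, along a subsequence `kₙ → k*` and, for every `m`, the points
`f(τₙ - m, xₙ, kₙ)` converge to some `zₘ`. Continuity gives `f(1, zₘ₊₁, k*) = zₘ`, so the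
`zₘ` glue to a whole `k*`-motion through `z₀`. Either `z₀ ∉ closure ω(k*)`, or points of
`ω(k*)` close to `z₀` stay `ε/2` away from `ω(kₙ)`, which is an `ω(k)`-bifurcation.
Conversely, a bifurcation point `y ∈ ω(x, k*)` is approached by `f(t, x, k*)` at arbitrarily
late times, hence by `f(t, x, kₙ)`; and a whole motion through `x ∉ closure ω(k)` reaches
`x` after arbitrarily long times.
-/

namespace PSemiflow

variable {X K : Type*} [MetricSpace X] [MetricSpace K] (S : PSemiflow X K)

def IsFarAtLateTimes (ε : ℝ) : Prop :=
  ∀ T : ℝ, ∃ x k, ∃ t > T, ε ≤ infDist (S.f t x k) (S.omegaK k)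

def HasOmegaBifurcation : Prop :=
  ∃ (kstar : K) (ks : ℕ → K) (y : X) (δ : ℝ), 0 < δ ∧ Tendsto ks atTop (𝓝 kstar) ∧
    y ∈ S.omegaK kstar ∧ ∀ n, δ ≤ infDist y (S.omegaK (ks n))

def HasWholeMotionOffOmega : Prop :=
  ∃ (x : X) (k : K) (φ : ℝ → X), S.IsWholeMotion x k φ ∧ x ∉ closure (S.omegaK k)

theorem tendsto_f {ι : Type*} {l : Filter ι} {u : ι → ℝ} {v : ι → X} {w : ι → K}
    {t : ℝ} {x : X} {k : K} (ht : 0 ≤ t) (hu0 : ∀ᶠ i in l, 0 ≤ u i)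
    (hu : Tendsto u l (𝓝 t)) (hv : Tendsto v l (𝓝 x)) (hw : Tendsto w l (𝓝 k)) :
    Tendsto (fun i => S.f (u i) (v i) (w i)) l (𝓝 (S.f t x k)) :=
  (S.cont (t, x, k) ht).tendsto.comp <|
    tendsto_nhdsWithin_iff.2 ⟨hu.prodMk_nhds (hv.prodMk_nhds hw), hu0⟩

section Compact

variable [CompactSpace X]

theorem exists_mem_omega_subseq_tendsto {t : ℕ → ℝ} (ht0 : ∀ n, 0 ≤ t n)
    (ht : Tendsto t atTop atTop) (x : X) (k : K) :
    ∃ y ∈ S.omega x k, ∃ φ : ℕ → ℕ, StrictMono φ ∧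
      Tendsto (fun n => S.f (t (φ n)) x k) atTop (𝓝 y) := by
  obtain ⟨y, φ, hφ, hy⟩ := CompactSpace.tendsto_subseq fun n => S.f (t n) x k
  exact ⟨y, ⟨t ∘ φ, fun n => ht0 (φ n), ht.comp hφ.tendsto_atTop, hy⟩, φ, hφ, hy⟩

theorem omega_nonempty (x : X) (k : K) : (S.omega x k).Nonempty := by
  obtain ⟨y, hy, -⟩ := S.exists_mem_omega_subseq_tendsto (fun n => Nat.cast_nonneg n)
    tendsto_natCast_atTop_atTop x k
  exact ⟨y, hy⟩

theorem eventually_infDist_omegaK_lt (x : X) (k : K) {ε : ℝ} (hε : 0 < ε) :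
    ∀ᶠ t in atTop, infDist (S.f t x k) (S.omegaK k) < ε := by
  by_contra h
  simp only [not_eventually, not_lt, frequently_atTop] at h
  choose s hs hfar using fun n : ℕ => h n
  have hs0 : ∀ n, 0 ≤ s n := fun n => (Nat.cast_nonneg n).trans (hs n)
  obtain ⟨y, hy, φ, hφ, hlim⟩ := S.exists_mem_omega_subseq_tendsto hs0
    (tendsto_atTop_mono hs tendsto_natCast_atTop_atTop) x k
  have hdist : Tendsto (fun n => infDist (S.f (s (φ n)) x k) (S.omegaK k)) atTop (𝓝 0) := by
    rw [← infDist_zero_of_mem (mem_iUnion.2 ⟨x, hy⟩ : y ∈ S.omegaK k)]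
    exact ((continuous_infDist_pt _).tendsto y).comp hlim
  exact hε.not_ge (ge_of_tendsto' hdist fun n => hfar (φ n))

theorem le_eta3 {x : X} {k : K} {ε τ : ℝ} (hε : 0 < ε)
    (hτ : ε ≤ infDist (S.f τ x k) (S.omegaK k)) : τ ≤ S.eta3 x k ε := by
  obtain ⟨a, ha⟩ := eventually_atTop.1 (S.eventually_infDist_omegaK_lt x k hε)
  refine le_csInf ⟨max a 0, le_max_right a 0, fun t ht => ha t (le_max_left a 0 |>.trans ht.le)⟩ ?_
  rintro b ⟨-, hb⟩
  by_contra! hbτ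
  exact (hb τ hbτ).not_ge hτ

end Compact

theorem exists_far_of_lt_eta3 {x : X} {k : K} {ε T : ℝ} (hT : 0 ≤ T) (h : T < S.eta3 x k ε) :
    ∃ t > T, ε ≤ infDist (S.f t x k) (S.omegaK k) := by
  by_contra! hnear
  exact h.not_ge (csInf_le ⟨0, fun t ht => ht.1⟩ ⟨hT, hnear⟩)

theorem slowEta3_iff_exists_isFarAtLateTimes [CompactSpace X] :
    S.SlowEta3 ↔ ∃ ε > 0, S.IsFarAtLateTimes ε := by
  refine exists_congr fun ε => and_congr_right fun hε => ⟨fun h T => ?_, fun h T _ => ?_⟩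
  · obtain ⟨x, k, hxk⟩ := h (max T 0 + 1) (by positivity)
    obtain ⟨t, ht, hfar⟩ := S.exists_far_of_lt_eta3 (by positivity) hxk
    exact ⟨x, k, t, (le_max_left T 0).trans_lt (by linarith), hfar⟩
  · obtain ⟨x, k, t, ht, hfar⟩ := h T
    exact ⟨x, k, ht.trans_le (S.le_eta3 hε hfar)⟩

section Chain

variable {S} {k : K} {z : ℕ → X}

theorem f_natCast_of_chain (hz : ∀ m, S.f 1 (z (m + 1)) k = z m) (m p : ℕ) :
    S.f p (z (m + p)) k = z m := by
  induction p with
  | zero => simpa using S.map_zero (z m) k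
  | succ p ih =>
    rw [← add_assoc, Nat.cast_succ, ← S.semigroup p 1 p.cast_nonneg zero_le_one, hz, ih]

theorem f_add_eq_of_chain (hz : ∀ m, S.f 1 (z (m + 1)) k = z m) {t : ℝ} {m n : ℕ}
    (hm : 0 ≤ t + m) (hn : 0 ≤ t + n) : S.f (t + m) (z m) k = S.f (t + n) (z n) k := by
  wlog hmn : m ≤ n generalizing m n
  · exact (this hn hm (le_of_not_ge hmn)).symm
  obtain ⟨p, rfl⟩ := Nat.exists_eq_add_of_le hmn
  rw [← f_natCast_of_chain hz m p, S.semigroup _ _ hm p.cast_nonneg]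
  push_cast
  ring_nf

theorem exists_isWholeMotion_of_chain (hz : ∀ m, S.f 1 (z (m + 1)) k = z m) :
    ∃ φ, S.IsWholeMotion (z 0) k φ := by
  have hN : ∀ t : ℝ, 0 ≤ t + ⌈-t⌉₊ := fun t => by linarith [Nat.le_ceil (-t)]
  refine ⟨fun t => S.f (t + ⌈-t⌉₊) (z ⌈-t⌉₊) k, by simp [S.map_zero], fun s t ht => ?_⟩
  rw [S.semigroup _ _ ht (hN s), ← add_assoc, add_comm t s]
  exact f_add_eq_of_chain hz (by linarith [hN s]) (hN (s + t))

theorem chain_of_tendsto {ι : Type*} {l : Filter ι} [l.NeBot] {τ : ι → ℝ} {x : ι → X}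
    {ks : ι → K} (hτ : Tendsto τ l atTop) (hk : Tendsto ks l (𝓝 k))
    (hz : ∀ m : ℕ, Tendsto (fun i => S.f (τ i - m) (x i) (ks i)) l (𝓝 (z m))) (m : ℕ) :
    S.f 1 (z (m + 1)) k = z m := by
  have hτm : ∀ᶠ i in l, 0 ≤ τ i - (m + 1 : ℕ) :=
    hτ.eventually (eventually_ge_atTop _) |>.mono fun i => sub_nonneg.2
  refine tendsto_nhds_unique ((S.tendsto_f zero_le_one (.of_forall fun _ => zero_le_one)
    tendsto_const_nhds (hz (m + 1)) hk).congr' ?_) (hz m)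
  filter_upwards [hτm] with i hi
  rw [S.semigroup _ _ zero_le_one hi]
  push_cast
  ring_nf

end Chain

theorem hasOmegaBifurcation_of_tendsto {p : ℕ → X} {ks : ℕ → K} {z : X} {kstar : K} {ε : ℝ}
    (hε : 0 < ε) (hp : Tendsto p atTop (𝓝 z)) (hk : Tendsto ks atTop (𝓝 kstar))
    (hfar : ∀ n, ε ≤ infDist (p n) (S.omegaK (ks n))) (hz : z ∈ closure (S.omegaK kstar)) :
    S.HasOmegaBifurcation := by
  obtain ⟨y, hy, hzy⟩ := Metric.mem_closure_iff.1 hz (ε / 4) (by positivity)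
  obtain ⟨N, hN⟩ := Metric.tendsto_atTop.1 hp (ε / 4) (by positivity)
  refine ⟨kstar, fun n => ks (n + N), y, ε / 2, by positivity, hk.comp (tendsto_add_atTop_nat N),
    hy, fun n => ?_⟩
  linarith [infDist_le_infDist_add_dist (x := p (n + N)) (y := y) (s := S.omegaK (ks (n + N))),
    hfar (n + N), dist_triangle (p (n + N)) z y, hN (n + N) (Nat.le_add_left N n)]

theorem hasOmegaBifurcation_or_hasWholeMotionOffOmega [CompactSpace X] [CompactSpace K] {ε : ℝ}
    (hε : 0 < ε) (hfar : S.IsFarAtLateTimes ε) :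
    S.HasOmegaBifurcation ∨ S.HasWholeMotionOffOmega := by
  choose x k τ hτ hfar using fun n : ℕ => hfar n
  -- `S.f` at the negative times `τ n - m`, `n` small, is junk; only large `n` matter.
  obtain ⟨⟨z, kstar⟩, σ, hσ, hlim⟩ := CompactSpace.tendsto_subseq
    fun n => ((fun m : ℕ => S.f (τ n - m) (x n) (k n)), k n)
  have hk : Tendsto (k ∘ σ) atTop (𝓝 kstar) := (continuous_snd.tendsto _).comp hlim
  have hz : ∀ m : ℕ, Tendsto (fun n => S.f (τ (σ n) - m) (x (σ n)) (k (σ n))) atTop (𝓝 (z m)) :=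
    tendsto_pi_nhds.1 ((continuous_fst.tendsto _).comp hlim)
  have hτ : Tendsto (τ ∘ σ) atTop atTop := tendsto_atTop_mono (fun n => (hτ (σ n)).le)
    (tendsto_natCast_atTop_atTop.comp hσ.tendsto_atTop)
  obtain ⟨φ, hφ⟩ := exists_isWholeMotion_of_chain (chain_of_tendsto hτ hk hz)
  by_cases hz0 : z 0 ∈ closure (S.omegaK kstar)
  · refine .inl (S.hasOmegaBifurcation_of_tendsto hε ?_ hk (fun n => hfar (σ n)) hz0)
    simpa using hz 0
  · exact .inr ⟨z 0, kstar, φ, hφ, hz0⟩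

variable {S}

theorem HasOmegaBifurcation.exists_isFarAtLateTimes (h : S.HasOmegaBifurcation) :
    ∃ ε > 0, S.IsFarAtLateTimes ε := by
  obtain ⟨kstar, ks, y, δ, hδ, hks, hy, hbif⟩ := h
  obtain ⟨x, t, ht0, htop, hconv⟩ := mem_iUnion.1 hy
  refine ⟨δ / 3, by positivity, fun T => ?_⟩
  obtain ⟨m, hmT, hmy⟩ := ((htop.eventually_gt_atTop T).and
    (Metric.tendsto_nhds.1 hconv (δ / 3) (by positivity))).exists
  have hks' := S.tendsto_f (ht0 m) (.of_forall fun _ => ht0 m) tendsto_const_nhds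
    tendsto_const_nhds (x := x) hks
  obtain ⟨n, hn⟩ := (Metric.tendsto_nhds.1 hks' (δ / 3) (by positivity)).exists
  refine ⟨x, ks n, t m, hmT, ?_⟩
  linarith [infDist_le_infDist_add_dist (x := y) (y := S.f (t m) x (ks n)) (s := S.omegaK (ks n)),
    hbif n, dist_triangle_left y (S.f (t m) x (ks n)) (S.f (t m) x kstar),
    dist_comm (S.f (t m) x (ks n)) (S.f (t m) x kstar)]

theorem HasWholeMotionOffOmega.exists_isFarAtLateTimes [CompactSpace X]
    (h : S.HasWholeMotionOffOmega) : ∃ ε > 0, S.IsFarAtLateTimes ε := by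
  obtain ⟨x, k, φ, ⟨hφ0, hφ⟩, hx⟩ := h
  obtain ⟨y, hy⟩ := S.omega_nonempty x k
  have hne : (S.omegaK k).Nonempty := ⟨y, mem_iUnion.2 ⟨x, hy⟩⟩
  refine ⟨_, (infDist_pos_iff_notMem_closure hne).1 hx, fun T => ?_⟩
  refine ⟨φ (-(max T 0 + 1)), k, max T 0 + 1, (le_max_left T 0).trans_lt (lt_add_one _), ?_⟩
  rw [hφ _ _ (by positivity), neg_add_cancel, hφ0]

end PSemiflow

/-- Theorem 2.8: the system possesses η₃-slow relaxations iff (1) there are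
`ω(k)`-bifurcations, or (2) there is a whole `(k,x)`-motion with
`x ∉ closure (ω(k))`. -/
theorem slowEta3_iff {X K : Type*} [MetricSpace X] [CompactSpace X]
    [MetricSpace K] [CompactSpace K] (S : PSemiflow X K) :
    S.SlowEta3 ↔
      ((∃ (kstar : K) (ks : ℕ → K) (y : X) (δ : ℝ), 0 < δ ∧
          Tendsto ks atTop (𝓝 kstar) ∧
          y ∈ S.omegaK kstar ∧ ∀ n, δ ≤ infDist y (S.omegaK (ks n))) ∨
        (∃ (x : X) (k : K) (φ : ℝ → X), S.IsWholeMotion x k φ ∧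
          x ∉ closure (S.omegaK k))) := by
  change S.SlowEta3 ↔ S.HasOmegaBifurcation ∨ S.HasWholeMotionOffOmega
  rw [S.slowEta3_iff_exists_isFarAtLateTimes]
  constructor
  · rintro ⟨ε, hε, hfar⟩
    exact S.hasOmegaBifurcation_or_hasWholeMotionOffOmega hε hfar
  · rintro (hbif | hwhole)
    exacts [hbif.exists_isFarAtLateTimes, hwhole.exists_isFarAtLateTimes]
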